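/- arXiv:1806.03712 — 3 statements merged into one kernel-verified Lean document; each statement's English description precedes it below -/
import Mathlib

section
/- Every element of the monoid M_ℓ can be written in the form θ^k X^n for some k ∈ ℤ_ℓ and n ∈ ℕ. -/
/-- The free product monoid `W_ℓ = ℕ ∗ ℤ_ℓ` (with the convention `ℤ_0 = ℤ`,
realized via `ZMod ℓ`). -/
abbrev Wl (ℓ : ℕ) : Type := Monoid.Coprod (Multiplicative ℕ) (Multiplicative (ZMod ℓ))

/-- The generator `X` of the factor `ℕ` of `W_ℓ`. -/
def Xw (ℓ : ℕ) : Wl ℓ := Monoid.Coprod.inl (Multiplicative.ofAdd (1 : ℕ))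

/-- The element `θ^k` of `W_ℓ` for `k ∈ ℤ_ℓ`; `θw ℓ 1` is the generator `θ`
of the factor `ℤ_ℓ` and `θw ℓ (-1)` is its inverse `θ⁻¹`. -/
def θw (ℓ : ℕ) (k : ZMod ℓ) : Wl ℓ := Monoid.Coprod.inr (Multiplicative.ofAdd k)

/-- The monoid congruence on `W_ℓ` generated by the relation `Xθ = θ⁻¹X`. -/
def MlCon (ℓ : ℕ) : Con (Wl ℓ) :=
  conGen (fun u v => u = Xw ℓ * θw ℓ 1 ∧ v = θw ℓ (-1) * Xw ℓ)

/-- The monoid `M_ℓ`, quotient of `W_ℓ = ℕ ∗ ℤ_ℓ` by the relation `Xθ = θ⁻¹X`. -/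
abbrev Ml (ℓ : ℕ) : Type := (MlCon ℓ).Quotient

/-- The class of `X` in `M_ℓ`. -/
def Xm (ℓ : ℕ) : Ml ℓ := (MlCon ℓ).mk' (Xw ℓ)

/-- The class of `θ^k` in `M_ℓ`, for `k ∈ ℤ_ℓ`. -/
def Θm (ℓ : ℕ) (k : ZMod ℓ) : Ml ℓ := (MlCon ℓ).mk' (θw ℓ k)

/-! Since `X θ = θ⁻¹ X`, the element `X` conjugates every `θ^a` to `θ^(-a)`: the `a` for which
this holds form a subgroup of `ℤ_ℓ` containing `1`. Hence
`θ^a X^n θ^b X^m = θ^(a + (-1)^n b) X^(n+m)`, so the elements `θ^a X^n` form a submonoid;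
it contains the generators `θ` and `X` of `M_ℓ`. -/

open Multiplicative

namespace MonoidHom

variable {M A : Type*} [Monoid M] [AddCommGroup A] (θ : Multiplicative A →* M) (x : M)

def invertedBy : AddSubgroup A where
  carrier := {a | x * θ (ofAdd a) = θ (ofAdd (-a)) * x}
  zero_mem' := by simp
  add_mem' {a b} ha hb := by
    simp only [Set.mem_ofPred_eq, neg_add, ofAdd_add, map_mul] at ha hb ⊢
    rw [← mul_assoc, ha, mul_assoc, hb, mul_assoc]
  neg_mem' {a} ha := by
    have hinv : θ (ofAdd a) * θ (ofAdd (-a)) = 1 := by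
      rw [← map_mul, ← ofAdd_add, add_neg_cancel, ofAdd_zero, map_one]
    simp only [Set.mem_ofPred_eq, neg_neg] at ha ⊢
    calc x * θ (ofAdd (-a)) = θ (ofAdd a) * θ (ofAdd (-a)) * (x * θ (ofAdd (-a))) := by
          rw [hinv, one_mul]
      _ = θ (ofAdd a) * (θ (ofAdd (-a)) * x) * θ (ofAdd (-a)) := by simp only [mul_assoc]
      _ = θ (ofAdd a) * x := by rw [← ha, mul_assoc, mul_assoc, hinv, mul_one]

variable {θ x}

theorem mem_invertedBy {a : A} : a ∈ θ.invertedBy x ↔ x * θ (ofAdd a) = θ (ofAdd (-a)) * x :=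
  Iff.rfl

theorem pow_mul_eq_of_invertedBy_eq_top (h : θ.invertedBy x = ⊤) (n : ℕ) (a : A) :
    x ^ n * θ (ofAdd a) = θ (ofAdd ((-1 : ℤ) ^ n • a)) * x ^ n := by
  induction n generalizing a with
  | zero => simp
  | succ n ih =>
    have hx := mem_invertedBy.1 (h ▸ AddSubgroup.mem_top a)
    rw [pow_succ, mul_assoc, hx, ← mul_assoc, ih, mul_assoc, pow_succ, mul_smul, neg_one_smul,
      smul_neg]

theorem exists_eq_mul_pow_of_mem_closure (h : θ.invertedBy x = ⊤) {m : M}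
    (hm : m ∈ Submonoid.closure (Set.range θ ∪ {x})) :
    ∃ (a : A) (n : ℕ), m = θ (ofAdd a) * x ^ n := by
  induction hm using Submonoid.closure_induction with
  | mem m hm =>
    rcases hm with ⟨a, rfl⟩ | rfl
    · exact ⟨toAdd a, 0, by simp⟩
    · exact ⟨0, 1, by simp⟩
  | one => exact ⟨0, 0, by simp⟩
  | mul _ _ _ _ ih₁ ih₂ =>
    obtain ⟨a, n, rfl⟩ := ih₁
    obtain ⟨b, k, rfl⟩ := ih₂
    refine ⟨a + (-1 : ℤ) ^ n • b, n + k, ?_⟩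
    rw [mul_assoc, ← mul_assoc (x ^ n), pow_mul_eq_of_invertedBy_eq_top h, ofAdd_add, map_mul,
      pow_add]
    simp only [mul_assoc]

end MonoidHom

def Θhom (ℓ : ℕ) : Multiplicative (ZMod ℓ) →* Ml ℓ := (MlCon ℓ).mk'.comp Monoid.Coprod.inr

theorem invertedBy_Θhom_Xm (ℓ : ℕ) : (Θhom ℓ).invertedBy (Xm ℓ) = ⊤ := by
  have hone : (1 : ZMod ℓ) ∈ (Θhom ℓ).invertedBy (Xm ℓ) := by
    show (MlCon ℓ).mk' (Xw ℓ) * (MlCon ℓ).mk' (θw ℓ 1)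
      = (MlCon ℓ).mk' (θw ℓ (-1)) * (MlCon ℓ).mk' (Xw ℓ)
    simp only [← map_mul]
    exact (MlCon ℓ).eq.2 (ConGen.Rel.of _ _ ⟨rfl, rfl⟩)
  refine (AddSubgroup.eq_top_iff' _).2 fun k => ?_
  obtain ⟨z, rfl⟩ := ZMod.intCast_surjective k
  rw [← zsmul_one]
  exact AddSubgroup.zsmul_mem _ hone z

theorem mk'_inl_eq_Xm_pow (ℓ n : ℕ) :
    (MlCon ℓ).mk' (Monoid.Coprod.inl (ofAdd n)) = Xm ℓ ^ n := by
  induction n with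
  | zero => exact map_one ((MlCon ℓ).mk'.comp Monoid.Coprod.inl)
  | succ n ih =>
    rw [ofAdd_add, map_mul, map_mul, ih]
    exact (pow_succ (Xm ℓ) n).symm

theorem Ml_closure_eq_top (ℓ : ℕ) : Submonoid.closure (Set.range (Θhom ℓ) ∪ {Xm ℓ}) = ⊤ := by
  refine (Submonoid.eq_top_iff' _).2 fun m => ?_
  obtain ⟨w, rfl⟩ := (MlCon ℓ).mk'_surjective m
  induction w using Monoid.Coprod.induction_on with
  | inl a =>
    rw [← ofAdd_toAdd a, mk'_inl_eq_Xm_pow]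
    exact pow_mem (Submonoid.subset_closure (Set.mem_union_right _ (Set.mem_singleton (Xm ℓ)))) _
  | inr b => exact Submonoid.subset_closure (Set.mem_union_left _ ⟨b, rfl⟩)
  | mul _ _ hv hw =>
    rw [map_mul]
    exact mul_mem hv hw

/-- Every element of `M_ℓ` can be written in the form `θ^k X^n` for some
`k ∈ ℤ_ℓ` and `n ∈ ℕ`. -/
theorem Ml_normal_form_exists (ℓ : ℕ) (m : Ml ℓ) :
    ∃ (k : ZMod ℓ) (n : ℕ), m = Θm ℓ k * (Xm ℓ) ^ n := by
  have hm : m ∈ Submonoid.closure (Set.range (Θhom ℓ) ∪ {Xm ℓ}) := by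
    rw [Ml_closure_eq_top]
    trivial
  obtain ⟨k, n, rfl⟩ := MonoidHom.exists_eq_mul_pow_of_mem_closure (invertedBy_Θhom_Xm ℓ) hm
  exact ⟨k, n, rfl⟩
end

section
/- For k, k' ∈ ℤ_ℓ and n, n' ∈ ℕ, one has θ^k X^n = θ^{k'} X^{n'} in the monoid M_ℓ if and only if n = n' and k = k'. In other words, the normal form θ^k X^n of an element of M_ℓ is unique. -/
/-!
`M_ℓ` maps to the dihedral-type group `ℤ_ℓ ⋊ ℤ`, where the generator of `ℤ` acts on
`ℤ_ℓ` by negation: send `θ ↦ (1, 0)` and `X ↦ (0, 1)`. The relation `Xθ = θ⁻¹X` holds there, and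
`θ^k X^n` is sent to `(k, n)`, so distinct normal forms have distinct images.
-/

open Multiplicative SemidirectProduct

def negPowAction (A : Type*) [CommGroup A] : Multiplicative ℤ →* MulAut A :=
  zpowersHom _ (MulEquiv.inv A)

@[simp]
lemma negPowAction_ofAdd_one_apply {A : Type*} [CommGroup A] (a : A) :
    negPowAction A (ofAdd 1) a = a⁻¹ := by
  simp [negPowAction]

abbrev Dl (ℓ : ℕ) : Type := Multiplicative (ZMod ℓ) ⋊[negPowAction _] Multiplicative ℤ

def Wl.toDl (ℓ : ℕ) : Wl ℓ →* Dl ℓ :=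
  Monoid.Coprod.lift (powersHom _ (inr (ofAdd 1))) inl

@[simp]
lemma Wl.toDl_Xw (ℓ : ℕ) : Wl.toDl ℓ (Xw ℓ) = inr (ofAdd 1) := by
  simp [Wl.toDl, Xw]

@[simp]
lemma Wl.toDl_θw (ℓ : ℕ) (k : ZMod ℓ) : Wl.toDl ℓ (θw ℓ k) = inl (ofAdd k) := by
  simp [Wl.toDl, θw]

lemma MlCon_le_ker_toDl (ℓ : ℕ) : MlCon ℓ ≤ Con.ker (Wl.toDl ℓ) := by
  refine Con.conGen_le.mpr ?_
  rintro u v ⟨rfl, rfl⟩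
  ext <;> simp

def Ml.toDl (ℓ : ℕ) : Ml ℓ →* Dl ℓ := (MlCon ℓ).lift (Wl.toDl ℓ) (MlCon_le_ker_toDl ℓ)

lemma Ml.toDl_Θm (ℓ : ℕ) (k : ZMod ℓ) : Ml.toDl ℓ (Θm ℓ k) = inl (ofAdd k) :=
  (Con.lift_mk' _ _).trans (Wl.toDl_θw ℓ k)

lemma Ml.toDl_Xm (ℓ : ℕ) : Ml.toDl ℓ (Xm ℓ) = inr (ofAdd 1) :=
  (Con.lift_mk' _ _).trans (Wl.toDl_Xw ℓ)

lemma Ml.toDl_normalForm (ℓ : ℕ) (k : ZMod ℓ) (n : ℕ) :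
    Ml.toDl ℓ (Θm ℓ k * Xm ℓ ^ n) = ⟨ofAdd k, ofAdd (n : ℤ)⟩ := by
  rw [mk_eq_inl_mul_inr, map_mul, map_pow (Ml.toDl ℓ), Ml.toDl_Θm, Ml.toDl_Xm, ← map_pow,
    ← ofAdd_nsmul, nsmul_one]

/-- Uniqueness of the normal form `θ^k X^n` in `M_ℓ`: for `k, k' ∈ ℤ_ℓ` and `n, n' ∈ ℕ`,
`θ^k X^n = θ^{k'} X^{n'}` in `M_ℓ` if and only if `n = n'` and `k = k'`. -/
theorem Ml_normal_form_unique (ℓ : ℕ) (k k' : ZMod ℓ) (n n' : ℕ) :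
    Θm ℓ k * (Xm ℓ) ^ n = Θm ℓ k' * (Xm ℓ) ^ n' ↔ n = n' ∧ k = k' := by
  constructor
  · intro h
    have h' := congrArg (Ml.toDl ℓ) h
    rw [Ml.toDl_normalForm, Ml.toDl_normalForm, SemidirectProduct.ext_iff] at h'
    simpa [and_comm] using h'
  · rintro ⟨rfl, rfl⟩
    rfl
end

section
/- Let γ₁, …, γₙ and γ'₁, …, γ'ₙ be elements of Γ with n ≥ 1. The words γ₁⋯γₙ and γ'₁⋯γ'ₙ represent the same element of W(Γ, Λ) if and only if there exist λ₁, …, λ_{n−1} ∈ Λ such that γ'₁ = γ₁λ₁, γ'ᵢ = λ_{i−1}⁻¹γᵢλᵢ for every 1 < i < n, and γ'ₙ = λ_{n−1}⁻¹γₙ (for n = 1 this means γ'₁ = γ₁). -/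
/-! Equality in `W(Γ, Λ)` is governed by the elements `cᵢ ∈ Λ` carried across the letter
boundaries. The relation "`mᵢ = cᵢ₋₁⁻¹ lᵢ cᵢ` with all `cᵢ ∈ Λ` and trivial carries at both ends"
is a congruence on `F(Γ)` containing the generating relations, hence contains the congruence
defining `W`. Conversely, such a twist is realised by elementary moves pushing `c₁, c₂, …`
across the boundaries from left to right. -/

/-- The elementary relation on the free monoid `F(Γ)`: the two-letter word `(γλ)·γ'`
is related to the two-letter word `γ·(λγ')`, for `γ, γ' ∈ Γ` and `λ ∈ Λ`. -/
def wrel (Γ : Type*) [Group Γ] (Λ : Subgroup Γ) : FreeMonoid Γ → FreeMonoid Γ → Prop :=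
  fun u v => ∃ γ γ' l : Γ, l ∈ Λ ∧
    u = FreeMonoid.of (γ * l) * FreeMonoid.of γ' ∧
    v = FreeMonoid.of γ * FreeMonoid.of (l * γ')

/-- The monoid congruence on `F(Γ)` generated by the relations `(γλ)·γ' ∼ γ·(λγ')`.
Its quotient is the monoid `W(Γ, Λ)`. -/
def Wcon (Γ : Type*) [Group Γ] (Λ : Subgroup Γ) : Con (FreeMonoid Γ) := conGen (wrel Γ Λ)

/-- The class in `W(Γ, Λ)` of the word `γ₁⋯γₙ` given by `g : Fin n → Γ`. -/
def mkW {Γ : Type*} [Group Γ] (Λ : Subgroup Γ) {n : ℕ} (g : Fin n → Γ) :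
    (Wcon Γ Λ).Quotient :=
  (Wcon Γ Λ).mk' (FreeMonoid.ofList (List.ofFn g))

section Twisted

variable {Γ : Type*} [Group Γ] (Λ : Subgroup Γ)

/-- `Twisted Λ c l m`: `m` arises from `l` by `mᵢ = cᵢ₋₁⁻¹ lᵢ cᵢ` with `cᵢ ∈ Λ` for `i ≥ 1`,
incoming carry `c₀ = c` and outgoing carry `1`. -/
inductive Twisted : Γ → List Γ → List Γ → Prop
  | nil : Twisted 1 [] []
  | cons {c d a b : Γ} {l m : List Γ} (hd : d ∈ Λ) (hb : b = c⁻¹ * a * d)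
      (h : Twisted d l m) : Twisted c (a :: l) (b :: m)

variable {Λ}

theorem Twisted.refl : ∀ l : List Γ, Twisted Λ 1 l l
  | [] => .nil
  | a :: l => .cons Λ.one_mem (by group) (Twisted.refl l)

theorem Twisted.symm {c : Γ} {l m : List Γ} (h : Twisted Λ c l m) : Twisted Λ c⁻¹ m l := by
  induction h with
  | nil => simpa using Twisted.nil
  | cons hd hb _ ih => exact .cons (Λ.inv_mem hd) (by subst hb; group) ih

theorem Twisted.trans {c d : Γ} {l m k : List Γ} (h : Twisted Λ c l m)
    (h' : Twisted Λ d m k) : Twisted Λ (c * d) l k := by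
  induction h generalizing d k with
  | nil => cases h'; simpa using Twisted.nil
  | cons hd hb _ ih =>
    cases h' with
    | cons hd' hb' h' => exact .cons (Λ.mul_mem hd hd') (by subst hb hb'; group) (ih h')

theorem Twisted.append {c : Γ} {l m l' m' : List Γ} (h : Twisted Λ c l m)
    (h' : Twisted Λ 1 l' m') : Twisted Λ c (l ++ l') (m ++ m') := by
  induction h with
  | nil => simpa using h'
  | cons hd hb _ ih => exact .cons hd hb ih

variable (Λ) in
def twistedCon : Con (FreeMonoid Γ) where
  r u v := Twisted Λ 1 u.toList v.toList
  iseqv := ⟨fun u => Twisted.refl _, fun h => by simpa using h.symm,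
    fun h h' => by simpa using h.trans h'⟩
  mul' h h' := h.append h'

theorem Wcon_le_twistedCon : Wcon Γ Λ ≤ twistedCon Λ := by
  refine Con.conGen_le.mpr ?_
  rintro _ _ ⟨γ, γ', l, hl, rfl, rfl⟩
  exact .cons (Λ.inv_mem hl) (by group) (.cons Λ.one_mem (by group) .nil)

theorem Wcon_of_twisted {c : Γ} {l m : List Γ} (h : Twisted Λ c l m) (hc : c ∈ Λ) (a : Γ) :
    Wcon Γ Λ (.of a * .ofList l) (.of (a * c) * .ofList m) := by
  induction h generalizing a with
  | nil => simpa using (Wcon Γ Λ).refl _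
  | @cons c d b b' l m hd hb _ ih =>
    have move : Wcon Γ Λ (.of a * .of b) (.of (a * c) * .of (c⁻¹ * b)) :=
      ConGen.Rel.of _ _ ⟨a * c, b, c⁻¹, Λ.inv_mem hc, by simp, rfl⟩
    have carry := (Wcon Γ Λ).mul ((Wcon Γ Λ).refl (.of (a * c))) (ih hd (c⁻¹ * b))
    rw [hb]
    simpa [mul_assoc] using (Wcon Γ Λ).trans ((Wcon Γ Λ).mul move ((Wcon Γ Λ).refl _)) carry

theorem Wcon_ofList_iff_twisted {l m : List Γ} :
    Wcon Γ Λ (.ofList l) (.ofList m) ↔ Twisted Λ 1 l m := by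
  refine ⟨fun h => Wcon_le_twistedCon h, fun h => ?_⟩
  cases h with
  | nil => exact (Wcon Γ Λ).refl _
  | @cons _ d a b _ _ hd hb h => simpa [hb] using Wcon_of_twisted h hd a

theorem twisted_ofFn_iff {n : ℕ} {c : Γ} (hc : c ∈ Λ) {g g' : Fin n → Γ} :
    Twisted Λ c (List.ofFn g) (List.ofFn g') ↔
      ∃ lam : Fin (n + 1) → Γ, (∀ i, lam i ∈ Λ) ∧ lam 0 = c ∧ lam (Fin.last n) = 1 ∧
        ∀ i : Fin n, g' i = (lam i.castSucc)⁻¹ * g i * lam i.succ := by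
  induction n generalizing c with
  | zero =>
    simp only [List.ofFn_zero, IsEmpty.forall_iff, and_true]
    refine ⟨fun h => ?_, fun ⟨lam, _, h0, hlast⟩ => ?_⟩
    · cases h; exact ⟨1, fun _ => Λ.one_mem, rfl, rfl⟩
    · exact h0 ▸ hlast ▸ Twisted.nil
  | succ n ih =>
    rw [List.ofFn_succ, List.ofFn_succ]
    constructor
    · rintro (_ | ⟨hd, hb, h⟩)
      obtain ⟨lam, hmem, h0, hlast, hrel⟩ := (ih hd).mp h
      refine ⟨Fin.cons c lam, Fin.cases hc hmem, rfl, hlast, Fin.cases ?_ fun i => ?_⟩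
      · simpa [h0] using hb
      · simpa [← Fin.succ_castSucc] using hrel i
    · rintro ⟨lam, hmem, rfl, hlast, hrel⟩
      refine .cons (hmem 1) (hrel 0) ((ih (hmem 1)).mpr ⟨lam ∘ Fin.succ, fun i => hmem _, rfl,
        hlast, fun i => ?_⟩)
      simpa [← Fin.succ_castSucc] using hrel i.succ

end Twisted

theorem WM_eq_iff_general (Γ : Type*) [Group Γ] (Λ : Subgroup Γ) (n : ℕ)
    (g g' : Fin n → Γ) :
    mkW Λ g = mkW Λ g' ↔
      ∃ lam : Fin (n + 1) → Γ, (∀ i, lam i ∈ Λ) ∧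
        lam 0 = 1 ∧ lam (Fin.last n) = 1 ∧
        ∀ i : Fin n, g' i = (lam i.castSucc)⁻¹ * g i * lam i.succ := by
  exact (Con.eq _).trans (Wcon_ofList_iff_twisted.trans (twisted_ofFn_iff Λ.one_mem))

/-- The words `γ₁⋯γₙ` and `γ'₁⋯γ'ₙ` (with `n ≥ 1`) represent the same element of
`W(Γ, Λ)` if and only if there are `λ₁, …, λ_{n-1} ∈ Λ` with `γ'₁ = γ₁λ₁`,
`γ'ᵢ = λ_{i-1}⁻¹γᵢλᵢ` for `1 < i < n` and `γ'ₙ = λ_{n-1}⁻¹γₙ`. Here the `λ`'s are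
encoded as a function `lam : Fin (n+1) → Γ` with `lam 0 = lam n = 1` and all values
in `Λ`, via `γ'ᵢ = (lam (i-1))⁻¹ γᵢ (lam i)` (`1`-indexed). -/
theorem WM_eq_iff (Γ : Type*) [Group Γ] (Λ : Subgroup Γ) (n : ℕ) (hn : 1 ≤ n)
    (g g' : Fin n → Γ) :
    mkW Λ g = mkW Λ g' ↔
      ∃ lam : Fin (n + 1) → Γ, (∀ i, lam i ∈ Λ) ∧
        lam 0 = 1 ∧ lam (Fin.last n) = 1 ∧
        ∀ i : Fin n, g' i = (lam i.castSucc)⁻¹ * g i * lam i.succ :=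
  WM_eq_iff_general Γ Λ n g g'
end
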